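/- Let A be a two-sided skew brace. Then A is semiprime if and only if A is strongly semiprime; that is, I*I ≠ {0} for every non-zero ideal I of A if and only if for every non-zero ideal I, every iterated *-product (with any bracketing) of finitely many copies of I is non-zero. -/
import Mathlib


/-- A skew (left) brace: a type with two group structures `(A,+)` and `(A,∘)`
(the latter written multiplicatively) sharing the same identity, satisfying the
left skew brace law `a ∘ (b + c) = a ∘ b − a + a ∘ c`. -/
class SkewBrace (A : Type*) extends AddGroup A, Group A where
  mul_add_eq : ∀ a b c : A, a * (b + c) = a * b - a + a * c

namespace SkewBrace

variable {A : Type*}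

/-- A skew brace is two-sided if `(a + b) ∘ c = a ∘ c − c + b ∘ c`. -/
def IsTwoSided (A : Type*) [SkewBrace A] : Prop :=
  ∀ a b c : A, (a + b) * c = a * c - c + b * c

/-- `a * b = −a + a∘b − b`. -/
def bstar [SkewBrace A] (a b : A) : A := -a + a * b - b

/-- the star operation of the opposite skew brace: `a *ₒₚ b = −b + a∘b − a`. -/
def bstarOp [SkewBrace A] (a b : A) : A := -b + a * b - a

/-- `X * Y`: the additive subgroup generated by all `x * y`, `x ∈ X`, `y ∈ Y`. -/
def starSet [SkewBrace A] (X Y : Set A) : AddSubgroup A :=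
  AddSubgroup.closure {z | ∃ x ∈ X, ∃ y ∈ Y, z = bstar x y}

/-- `A² = A * A`. -/
def sq (A : Type*) [SkewBrace A] : AddSubgroup A := starSet Set.univ Set.univ

/-- `A²ₒₚ`, the additive subgroup generated by all `a *ₒₚ b`. -/
def sqOp (A : Type*) [SkewBrace A] : AddSubgroup A :=
  AddSubgroup.closure {z | ∃ a b : A, z = bstarOp a b}

/-- A skew brace is weakly trivial if `A² ∩ A²ₒₚ = {0}`. -/
def IsWeaklyTrivial (A : Type*) [SkewBrace A] : Prop := sq A ⊓ sqOp A = ⊥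

/-- An ideal of a skew brace: an additive subgroup, normal in `(A,+)` and in
`(A,∘)`, and invariant under all `λ_a : b ↦ −a + a∘b`. -/
structure IsIdeal [SkewBrace A] (I : AddSubgroup A) : Prop where
  add_conj : ∀ a : A, ∀ x ∈ I, a + x - a ∈ I
  mul_conj : ∀ a : A, ∀ x ∈ I, a * x * a⁻¹ ∈ I
  lambda_mem : ∀ a : A, ∀ x ∈ I, -a + a * x ∈ I

/-- The left series `A¹ = A`, `Aⁿ⁺¹ = A * Aⁿ`; `leftSeries A n` is `Aⁿ⁺¹`. -/
def leftSeries (A : Type*) [SkewBrace A] : ℕ → AddSubgroup A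
  | 0 => ⊤
  | n + 1 => starSet Set.univ (leftSeries A n : Set A)

/-- The right series `A⁽¹⁾ = A`, `A⁽ⁿ⁺¹⁾ = A⁽ⁿ⁾ * A`; `rightSeries A n` is `A⁽ⁿ⁺¹⁾`. -/
def rightSeries (A : Type*) [SkewBrace A] : ℕ → AddSubgroup A
  | 0 => ⊤
  | n + 1 => starSet (rightSeries A n : Set A) Set.univ

/-- A skew brace is left nilpotent if its left series reaches `{0}`. -/
def IsLeftNilpotent (A : Type*) [SkewBrace A] : Prop := ∃ n, leftSeries A n = ⊥

/-- A skew brace is right nilpotent if its right series reaches `{0}`. -/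
def IsRightNilpotent (A : Type*) [SkewBrace A] : Prop := ∃ n, rightSeries A n = ⊥

/-- The series `A⁽¹⁾ = A`, `A^[n+1]` generated by the union of `A^[i] * A^[n+1-i]`;
`strongSeries A n` is `A^[n+1]`. -/
def strongSeries (A : Type*) [SkewBrace A] : ℕ → AddSubgroup A
  | 0 => ⊤
  | n + 1 => ⨆ i : Fin (n + 1),
      starSet (strongSeries A i.val : Set A) (strongSeries A (n - i.val) : Set A)
  decreasing_by
  · exact i.isLt
  · have := i.isLt; omega

/-- A skew brace is strongly nilpotent if the series `A^[n]` reaches `{0}`. -/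
def IsStronglyNilpotent (A : Type*) [SkewBrace A] : Prop := ∃ n, strongSeries A n = ⊥

/-- The derived series of a skew brace: `A₁ = A`, `Aₙ₊₁ = Aₙ * Aₙ`;
`derivedSeriesBrace A n` is `Aₙ₊₁`. -/
def derivedSeriesBrace (A : Type*) [SkewBrace A] : ℕ → AddSubgroup A
  | 0 => ⊤
  | n + 1 => starSet (derivedSeriesBrace A n : Set A) (derivedSeriesBrace A n : Set A)

/-- A skew brace is soluble if its derived series reaches `{0}`. -/
def IsSolubleBrace (A : Type*) [SkewBrace A] : Prop := ∃ n, derivedSeriesBrace A n = ⊥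

end SkewBrace

namespace SkewBrace

/-- `IsStarProduct I X` holds when `X` is an iterated `*`-product (under some
bracketing) of finitely many copies of `I`. -/
inductive IsStarProduct {A : Type*} [SkewBrace A] (I : AddSubgroup A) :
    AddSubgroup A → Prop
  | base : IsStarProduct I I
  | node {X Y : AddSubgroup A} : IsStarProduct I X → IsStarProduct I Y →
      IsStarProduct I (starSet (X : Set A) (Y : Set A))

end SkewBrace

namespace SkewBrace

section Aux

variable {A : Type*} [SkewBrace A]

lemma zero_eq_one' : (0 : A) = 1 := by
  have h := SkewBrace.mul_add_eq (1 : A) 0 0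
  simp only [one_mul, add_zero, zero_sub, zero_add] at h
  -- h : (0 : A) = -1
  have := congrArg Neg.neg h
  simpa using this

/-- `λ_a b`. -/
def lam (a b : A) : A := -a + a * b

lemma mul_eq_add_lam (a b : A) : a * b = a + lam a b := by
  rw [lam, add_neg_cancel_left]

lemma lam_add (a b c : A) : lam a (b + c) = lam a b + lam a c := by
  simp only [lam, SkewBrace.mul_add_eq, sub_eq_add_neg, add_assoc]

/-- `λ_a` as an additive homomorphism. -/
def lamHom (a : A) : A →+ A := AddMonoidHom.mk' (lam a) (lam_add a)

lemma lam_neg (a b : A) : lam a (-b) = -lam a b := by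
  simpa [lamHom] using (lamHom a).map_neg b

lemma lam_sub (a b c : A) : lam a (b - c) = lam a b - lam a c := by
  simpa [lamHom] using (lamHom a).map_sub b c

lemma lam_mul (a b c : A) : lam (a * b) c = lam a (lam b c) := by
  have h1 : a * (b * c) = a * b - a + a * lam b c := by
    conv_lhs => rw [mul_eq_add_lam b c]
    rw [SkewBrace.mul_add_eq]
  rw [lam, mul_assoc, h1]
  simp only [lam, sub_eq_add_neg, add_assoc, neg_add_cancel_left]

lemma lam_one (p : A) : lam 1 p = p := by
  rw [lam, one_mul, show (1 : A) = 0 from zero_eq_one'.symm, neg_zero, zero_add]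

lemma lam_lam_inv (b p : A) : lam b (lam b⁻¹ p) = p := by
  rw [← lam_mul, mul_inv_cancel, lam_one]

lemma bstar_eq (a b : A) : bstar a b = lam a b - b := rfl

/-- `(a∘b)*c = a*(b*c) + b*c + a*c`. -/
lemma bstar_mul_left (a b c : A) :
    bstar (a * b) c = bstar a (bstar b c) + bstar b c + bstar a c := by
  simp only [bstar_eq, lam_mul, lam_sub]
  simp only [sub_eq_add_neg, neg_add_rev, neg_neg, add_assoc, neg_add_cancel_left,
    add_neg_cancel_left]

/-- `a*(b∘c) = a*b + b + (a∘b)*c - b*c - b`. -/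
lemma bstar_mul_right (a b c : A) :
    bstar a (b * c) = bstar a b + b + bstar (a * b) c - bstar b c - b := by
  conv_lhs => rw [mul_eq_add_lam b c]
  simp only [bstar_eq, lam_add, lam_mul, lam_sub]
  simp only [sub_eq_add_neg, neg_add_rev, neg_neg, add_assoc, neg_add_cancel_left,
    add_neg_cancel_left]

/-- `λ_a(x*y) = (a∘x)*y - a*y`. -/
lemma lam_bstar (a x y : A) : lam a (bstar x y) = bstar (a * x) y - bstar a y := by
  simp only [bstar_eq, lam_sub, lam_mul]
  simp only [sub_eq_add_neg, neg_add_rev, neg_neg, add_assoc, neg_add_cancel_left,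
    add_neg_cancel_left]

section TwoSided

variable (h : IsTwoSided A)
include h

/-- `(a+b)*c = -b + a*c + b + b*c` in a two-sided skew brace. -/
lemma bstar_add_left (a b c : A) :
    bstar (a + b) c = -b + bstar a c + b + bstar b c := by
  simp only [bstar_eq, lam, h a b c]
  simp only [sub_eq_add_neg, neg_add_rev, neg_neg, add_assoc, neg_add_cancel_left,
    add_neg_cancel_left]

/-- `ρ_c z = z∘c - c`. -/
def rho (c z : A) : A := z * c - c

lemma rho_add (c a b : A) : rho c (a + b) = rho c a + rho c b := by
  simp only [rho, h a b c]
  simp only [sub_eq_add_neg, add_assoc]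

/-- `ρ_c` as an additive homomorphism (two-sided case). -/
def rhoHom (c : A) : A →+ A := AddMonoidHom.mk' (rho c) (rho_add h c)

lemma rho_neg (c a : A) : rho c (-a) = -rho c a := by
  simpa [rhoHom] using (rhoHom h c).map_neg a

omit h in
lemma mul_eq_rho_add (c z : A) : z * c = rho c z + c := by
  simp [rho, sub_add_cancel]

/-- `ρ_c(a*x) = -(a*c) + a*(x∘c)` in a two-sided skew brace. -/
lemma rho_bstar (c a x : A) : rho c (bstar a x) = -bstar a c + bstar a (x * c) := by
  have e : bstar a x = -a + (a * x + -x) := by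
    simp [bstar, sub_eq_add_neg, add_assoc]
  rw [e, rho_add h, rho_add h, rho_neg h, rho_neg h]
  simp only [rho, bstar, mul_assoc]
  simp only [sub_eq_add_neg, neg_add_rev, neg_neg, add_assoc, neg_add_cancel_left,
    add_neg_cancel_left]

end TwoSided

end Aux

end SkewBrace


namespace SkewBrace

section Ideals

variable {A : Type*} [SkewBrace A] {I : AddSubgroup A}

lemma IsIdeal.lam_mem (hI : IsIdeal I) (a : A) {x : A} (hx : x ∈ I) : lam a x ∈ I :=
  hI.lambda_mem a x hx

lemma IsIdeal.bstar_mem_right (hI : IsIdeal I) (a : A) {y : A} (hy : y ∈ I) :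
    bstar a y ∈ I :=
  I.sub_mem (hI.lambda_mem a y hy) hy

lemma IsIdeal.bstar_mem_left (hI : IsIdeal I) {x : A} (hx : x ∈ I) (a : A) :
    bstar x a ∈ I := by
  have h1 : a⁻¹ * x * a ∈ I := by simpa using hI.mul_conj a⁻¹ x hx
  have h2 : x * a = a + lam a (a⁻¹ * x * a) := by
    rw [← mul_eq_add_lam]; group
  have h3 : lam a (a⁻¹ * x * a) ∈ I := hI.lam_mem a h1
  have h4 : a + lam a (a⁻¹ * x * a) - a ∈ I := hI.add_conj a _ h3
  have h5 := I.add_mem (I.neg_mem hx) h4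
  show -x + x * a - a ∈ I
  rw [h2]
  simpa [sub_eq_add_neg, add_assoc] using h5

lemma mem_starSet_gen {x y : A} (hx : x ∈ I) (hy : y ∈ I) :
    bstar x y ∈ starSet (I : Set A) (I : Set A) :=
  AddSubgroup.subset_closure ⟨x, hx, y, hy, rfl⟩

lemma hom_preserves (f : A →+ A)
    (hf : ∀ x ∈ I, ∀ y ∈ I, f (bstar x y) ∈ starSet (I : Set A) (I : Set A))
    {z : A} (hz : z ∈ starSet (I : Set A) (I : Set A)) :
    f z ∈ starSet (I : Set A) (I : Set A) := by
  have h1 : f z ∈ (starSet (I : Set A) (I : Set A)).map f :=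
    AddSubgroup.mem_map_of_mem f hz
  rw [starSet, AddMonoidHom.map_closure] at h1
  have h2 : AddSubgroup.closure
      (f '' {z | ∃ x ∈ (I : Set A), ∃ y ∈ (I : Set A), z = bstar x y}) ≤
      starSet (I : Set A) (I : Set A) := by
    rw [AddSubgroup.closure_le]
    rintro t ⟨s, ⟨x, hx, y, hy, rfl⟩, rfl⟩
    exact hf x hx y hy
  exact h2 h1

/-- conjugation `z ↦ g + z - g` as an additive homomorphism. -/
def conjHom (g : A) : A →+ A :=
  AddMonoidHom.mk' (fun z => g + z - g) (by
    intro x y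
    simp [sub_eq_add_neg, add_assoc])

variable (h : IsTwoSided A) (hI : IsIdeal I)
include h hI

/-- Conjugation of `I*I` by elements of `I`. -/
lemma conjI {v : A} (hv : v ∈ I) {z : A} (hz : z ∈ starSet (I : Set A) (I : Set A)) :
    v + z - v ∈ starSet (I : Set A) (I : Set A) := by
  have := hom_preserves (conjHom v) ?_ hz
  · simpa [conjHom] using this
  · intro x hx y hy
    have h4 := bstar_add_left h x (-v) y
    have e : v + bstar x y - v = bstar (x + -v) y - bstar (-v) y := by
      rw [h4]; simp [sub_eq_add_neg, add_assoc]
    have m : bstar (x + -v) y - bstar (-v) y ∈ starSet (I : Set A) (I : Set A) :=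
      AddSubgroup.sub_mem _ (mem_starSet_gen (I.add_mem hx (I.neg_mem hv)) hy)
        (mem_starSet_gen (I.neg_mem hv) hy)
    show conjHom v (bstar x y) ∈ _
    simpa [conjHom, e] using m

lemma lam_J (a : A) {z : A} (hz : z ∈ starSet (I : Set A) (I : Set A)) :
    lam a z ∈ starSet (I : Set A) (I : Set A) := by
  have := hom_preserves (lamHom a) ?_ hz
  · simpa [lamHom] using this
  · intro x hx y hy
    show lamHom a (bstar x y) ∈ _
    have e0 : lamHom a (bstar x y) = lam a (bstar x y) := rfl
    rw [e0, lam_bstar]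
    have hxt : a * x * a⁻¹ ∈ I := hI.mul_conj a x hx
    have hax : a * x = a * x * a⁻¹ * a := by group
    rw [hax, bstar_mul_left]
    have hay : bstar a y ∈ I := hI.bstar_mem_right a hy
    have g1 : bstar (a * x * a⁻¹) (bstar a y) ∈ starSet (I : Set A) (I : Set A) :=
      mem_starSet_gen hxt hay
    have g3 : bstar a y + bstar (a * x * a⁻¹) y - bstar a y ∈
        starSet (I : Set A) (I : Set A) :=
      conjI h hI hay (mem_starSet_gen hxt hy)
    have := AddSubgroup.add_mem _ g1 g3
    simpa [sub_eq_add_neg, add_assoc] using this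

lemma bstar_add_sub_mem (b : A) {p y : A} (hp : p ∈ I) (hy : y ∈ I) :
    bstar (b + p) y - bstar b y ∈ starSet (I : Set A) (I : Set A) := by
  have hx : lam b⁻¹ p ∈ I := hI.lam_mem b⁻¹ hp
  have hbp : b + p = b * lam b⁻¹ p := by rw [mul_eq_add_lam, lam_lam_inv]
  rw [hbp, ← lam_bstar]
  exact lam_J h hI b (mem_starSet_gen hx hy)

lemma add_conj_J (a : A) {z : A} (hz : z ∈ starSet (I : Set A) (I : Set A)) :
    a + z - a ∈ starSet (I : Set A) (I : Set A) := by
  have := hom_preserves (conjHom a) ?_ hz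
  · simpa [conjHom] using this
  · intro x hx y hy
    show conjHom a (bstar x y) ∈ _
    have h4 := bstar_add_left h x (-a) y
    have e : a + bstar x y - a = bstar (x + -a) y - bstar (-a) y := by
      rw [h4]; simp [sub_eq_add_neg, add_assoc]
    have hx' : x + -a = -a + (a + x - a) := by
      simp [sub_eq_add_neg, add_assoc, neg_add_cancel_left]
    have m : bstar (x + -a) y - bstar (-a) y ∈ starSet (I : Set A) (I : Set A) := by
      rw [hx']
      exact bstar_add_sub_mem h hI (-a) (hI.add_conj a x hx) hy
    simpa [conjHom, e] using m

lemma rho_J (c : A) {z : A} (hz : z ∈ starSet (I : Set A) (I : Set A)) :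
    rho c z ∈ starSet (I : Set A) (I : Set A) := by
  have := hom_preserves (rhoHom h c) ?_ hz
  · simpa [rhoHom] using this
  · intro x hx y hy
    show rhoHom h c (bstar x y) ∈ _
    have e0 : rhoHom h c (bstar x y) = rho c (bstar x y) := rfl
    rw [e0, rho_bstar h]
    have hyt : c⁻¹ * y * c ∈ I := by simpa using hI.mul_conj c⁻¹ y hy
    have hxt : c⁻¹ * x * c ∈ I := by simpa using hI.mul_conj c⁻¹ x hx
    have hyc : y * c = c * (c⁻¹ * y * c) := by group
    rw [hyc, bstar_mul_right]
    have hxc : x * c = c * (c⁻¹ * x * c) := by group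
    rw [hxc, bstar_mul_left]
    have hw : bstar (c⁻¹ * x * c) (c⁻¹ * y * c) ∈ starSet (I : Set A) (I : Set A) :=
      mem_starSet_gen hxt hyt
    have hs : bstar c (bstar (c⁻¹ * x * c) (c⁻¹ * y * c)) ∈
        starSet (I : Set A) (I : Set A) := by
      have := lam_J h hI c hw
      have e1 : bstar c (bstar (c⁻¹ * x * c) (c⁻¹ * y * c)) =
          lam c (bstar (c⁻¹ * x * c) (c⁻¹ * y * c)) -
            bstar (c⁻¹ * x * c) (c⁻¹ * y * c) := rfl
      rw [e1]
      exact AddSubgroup.sub_mem _ this hw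
    have hsum := AddSubgroup.add_mem _ hs hw
    have hc := add_conj_J h hI c hsum
    simpa [sub_eq_add_neg, add_assoc] using hc

lemma mul_conj_J (a : A) {z : A} (hz : z ∈ starSet (I : Set A) (I : Set A)) :
    a * z * a⁻¹ ∈ starSet (I : Set A) (I : Set A) := by
  have e : a * z * a⁻¹ = -a⁻¹ + (rho a⁻¹ (lam a z) + a⁻¹) := by
    conv_lhs => rw [mul_eq_add_lam a z]
    rw [h a (lam a z) a⁻¹, mul_eq_rho_add a⁻¹ (lam a z), mul_inv_cancel,
      show (1 : A) = 0 from zero_eq_one'.symm, zero_sub]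
  have m2 : rho a⁻¹ (lam a z) ∈ starSet (I : Set A) (I : Set A) :=
    rho_J h hI a⁻¹ (lam_J h hI a hz)
  have m3 := add_conj_J h hI (-a⁻¹) m2
  rw [e]
  simpa [sub_eq_add_neg, neg_neg, add_assoc] using m3

/-- In a two-sided skew brace, `I*I` is an ideal whenever `I` is. -/
theorem isIdeal_starSet : IsIdeal (starSet (I : Set A) (I : Set A)) :=
  ⟨fun a x hx => add_conj_J h hI a hx,
   fun a x hx => mul_conj_J h hI a hx,
   fun a x hx => lam_J h hI a hx⟩

omit h in
lemma starSet_le_self : starSet (I : Set A) (I : Set A) ≤ I := by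
  rw [starSet, AddSubgroup.closure_le]
  rintro z ⟨x, hx, y, hy, rfl⟩
  exact hI.bstar_mem_right x hy

end Ideals

lemma starSet_mono {A : Type*} [SkewBrace A] {X Y X' Y' : Set A}
    (hX : X ⊆ X') (hY : Y ⊆ Y') : starSet X Y ≤ starSet X' Y' := by
  apply AddSubgroup.closure_mono
  rintro z ⟨x, hx, y, hy, rfl⟩
  exact ⟨x, hX hx, y, hY hy, rfl⟩

/-- The derived chain of an ideal: `D 0 = I`, `D (n+1) = (D n) * (D n)`. -/
def starChain {A : Type*} [SkewBrace A] (I : AddSubgroup A) : ℕ → AddSubgroup A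
  | 0 => I
  | n + 1 => starSet (starChain I n : Set A) (starChain I n : Set A)

end SkewBrace


open SkewBrace in
/-- A two-sided skew brace is semiprime iff it is strongly semiprime: `I * I ≠ {0}`
for every non-zero ideal `I` iff every iterated `*`-product of copies of a non-zero
ideal is non-zero. -/
theorem semiprime_iff_strongly_semiprime (A : Type*) [SkewBrace A] (h : IsTwoSided A) :
    (∀ I : AddSubgroup A, IsIdeal I → I ≠ ⊥ → starSet (I : Set A) (I : Set A) ≠ ⊥) ↔
    (∀ I : AddSubgroup A, IsIdeal I → I ≠ ⊥ →
      ∀ X : AddSubgroup A, IsStarProduct I X → X ≠ ⊥) := by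
  constructor
  · intro hsemi I hI hIne X hX
    have ideal_chain : ∀ n, IsIdeal (starChain I n) := by
      intro n
      induction n with
      | zero => exact hI
      | succ n ih => exact isIdeal_starSet h ih
    have ne_chain : ∀ n, starChain I n ≠ ⊥ := by
      intro n
      induction n with
      | zero => exact hIne
      | succ n ih => exact hsemi _ (ideal_chain n) ih
    have decr : ∀ n, starChain I (n + 1) ≤ starChain I n := fun n =>
      starSet_le_self (ideal_chain n)
    have anti : ∀ m n, m ≤ n → starChain I n ≤ starChain I m := by
      intro m n hmn
      induction hmn with
      | refl => exact le_refl _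
      | step _ ih => exact (decr _).trans ih
    have key : ∀ Y : AddSubgroup A, IsStarProduct I Y → ∃ n, starChain I n ≤ Y := by
      intro Y hY
      induction hY with
      | base => exact ⟨0, le_refl _⟩
      | node hX1 hY1 ih1 ih2 =>
        obtain ⟨n1, h1⟩ := ih1
        obtain ⟨n2, h2⟩ := ih2
        refine ⟨max n1 n2 + 1, ?_⟩
        have l1 : starChain I (max n1 n2) ≤ _ := (anti _ _ (le_max_left n1 n2)).trans h1
        have l2 : starChain I (max n1 n2) ≤ _ := (anti _ _ (le_max_right n1 n2)).trans h2
        exact starSet_mono (fun t ht => l1 ht) (fun t ht => l2 ht)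
    obtain ⟨n, hn⟩ := key X hX
    intro hbot
    rw [hbot, le_bot_iff] at hn
    exact ne_chain n hn
  · intro hstrong I hI hIne
    exact hstrong I hI hIne _ (IsStarProduct.node IsStarProduct.base IsStarProduct.base)
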